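/- arXiv:math/0608706 — 6 statements merged into one kernel-verified Lean document; each statement's English description precedes it below -/
import Mathlib

section
/- The function x ↦ (e^x - (1 + x))/x^2, extended by the value 1/2 at x = 0, is monotone increasing on the real line. -/
/-!
Taylor's formula with integral remainder for `exp` at `0`, rescaled to `[0, 1]`, writes the
function as `x ↦ ∫₀¹ (1 - t) e^{t x} dt` (at `x = 0` both sides are `1/2`). For `t ∈ [0, 1]` the
integrand is increasing in `x`, hence so is the integral.
-/

open Real intervalIntegral

lemma hasDerivAt_exp_mul_mul_one_sub_div_add {x : ℝ} (hx : x ≠ 0) (t : ℝ) :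
    HasDerivAt (fun t => exp (t * x) * ((1 - t) / x + 1 / x ^ 2))
      ((1 - t) * exp (t * x)) t := by
  have hexp : HasDerivAt (fun t => exp (t * x)) (exp (t * x) * x) t := by
    simpa using ((hasDerivAt_id t).mul_const x).exp
  have hlin : HasDerivAt (fun t => (1 - t) / x + 1 / x ^ 2) (-1 / x) t := by
    simpa using (((hasDerivAt_id t).const_sub 1).div_const x).add_const (1 / x ^ 2)
  refine (hexp.mul hlin).congr_deriv ?_
  field_simp
  ring

lemma integral_one_sub_mul_exp_mul_of_ne_zero {x : ℝ} (hx : x ≠ 0) :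
    ∫ t in (0 : ℝ)..1, (1 - t) * exp (t * x) = (exp x - (1 + x)) / x ^ 2 := by
  rw [integral_eq_sub_of_hasDerivAt (fun t _ => hasDerivAt_exp_mul_mul_one_sub_div_add hx t)
    (by apply Continuous.intervalIntegrable; fun_prop)]
  simp only [sub_self, zero_div, zero_add, one_mul, zero_mul, exp_zero, sub_zero]
  field_simp
  ring

lemma integral_one_sub_mul_exp_mul_eq_ite (x : ℝ) :
    ∫ t in (0 : ℝ)..1, (1 - t) * exp (t * x) =
      if x = 0 then 1 / 2 else (exp x - (1 + x)) / x ^ 2 := by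
  split_ifs with hx
  · subst hx
    simp only [mul_zero, exp_zero, mul_one]
    rw [integral_sub intervalIntegrable_const intervalIntegral.intervalIntegrable_id,
      integral_const, integral_id]
    norm_num
  · exact integral_one_sub_mul_exp_mul_of_ne_zero hx

lemma monotone_integral_one_sub_mul_exp_mul :
    Monotone fun x : ℝ => ∫ t in (0 : ℝ)..1, (1 - t) * exp (t * x) := by
  intro a b hab
  refine integral_mono_on zero_le_one (by apply Continuous.intervalIntegrable; fun_prop)
    (by apply Continuous.intervalIntegrable; fun_prop) fun t ⟨ht₀, ht₁⟩ => ?_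
  gcongr

/-- The function `x ↦ (e^x - (1 + x)) / x^2`, extended by the value `1/2` at `x = 0`,
is monotone increasing on the real line. -/
theorem monotone_exp_quadratic_ratio :
    Monotone (fun x : ℝ =>
      if x = 0 then (1 / 2 : ℝ) else (Real.exp x - (1 + x)) / x ^ 2) := by
  simpa only [integral_one_sub_mul_exp_mul_eq_ite] using monotone_integral_one_sub_mul_exp_mul
end

section
/- Duality formula for entropy: for a strictly positive integrable random variable G with G log G integrable, the entropy H(G) := E[G log G] - E[G] log E[G] equals the supremum over strictly positive random variables T (with T and G log T integrable) of E[G (log T - log E[T])]. -/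
/-!
The upper bound is Gibbs' inequality `g log t ≤ g log g + t - g`, integrated with
`t = T · E[G] / E[T]`: the normalisation makes `E[t] = E[G]`, so the right-hand side integrates
to `E[G log G]` while the left-hand side becomes `E[G log T] + E[G] (log E[G] - log E[T])`.
The bound is attained at `T = G`.
-/

open MeasureTheory Real

lemma Real.mul_log_le_mul_log_add_sub {g t : ℝ} (hg : 0 < g) (ht : 0 < t) :
    g * log t ≤ g * log g + (t - g) := by
  have h := mul_le_mul_of_nonneg_left (log_le_sub_one_of_pos (div_pos ht hg)) hg.le
  rw [log_div ht.ne' hg.ne', mul_sub_one, mul_div_cancel₀ t hg.ne'] at h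
  linarith

namespace MeasureTheory

variable {Ω : Type*} [MeasurableSpace Ω] {μ : Measure Ω}

lemma integral_pos_of_ae_pos [NeZero μ] {f : Ω → ℝ} (hf : ∀ᵐ ω ∂μ, 0 < f ω)
    (hfi : Integrable f μ) : 0 < ∫ ω, f ω ∂μ := by
  rw [integral_pos_iff_support_of_nonneg_ae (hf.mono fun _ h => h.le) hfi, pos_iff_ne_zero]
  intro h
  obtain ⟨ω, hpos, hzero⟩ := (hf.and (measure_eq_zero_iff_ae_notMem.1 h)).exists
  exact hzero hpos.ne'

lemma integral_mul_sub_const {G F : Ω → ℝ} (a : ℝ) (hGF : Integrable (fun ω => G ω * F ω) μ)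
    (hG : Integrable G μ) :
    ∫ ω, G ω * (F ω - a) ∂μ = ∫ ω, G ω * F ω ∂μ - (∫ ω, G ω ∂μ) * a := by
  simp_rw [mul_sub]
  rw [integral_sub hGF (hG.mul_const a), integral_mul_const]

lemma integral_mul_log_le {G S : Ω → ℝ} (hG : ∀ᵐ ω ∂μ, 0 < G ω) (hS : ∀ᵐ ω ∂μ, 0 < S ω)
    (hGi : Integrable G μ) (hSi : Integrable S μ)
    (hGlogG : Integrable (fun ω => G ω * log (G ω)) μ)
    (hGlogS : Integrable (fun ω => G ω * log (S ω)) μ) :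
    ∫ ω, G ω * log (S ω) ∂μ ≤ ∫ ω, G ω * log (G ω) ∂μ + (∫ ω, S ω ∂μ - ∫ ω, G ω ∂μ) := by
  have hSG : Integrable (fun ω => S ω - G ω) μ := hSi.sub hGi
  rw [← integral_sub hSi hGi, ← integral_add hGlogG hSG]
  refine integral_mono_ae hGlogS (hGlogG.add hSG) ?_
  filter_upwards [hG, hS] with ω hGω hSω
  exact mul_log_le_mul_log_add_sub hGω hSω

lemma integral_mul_log_sub_log_integral_le [NeZero μ] {G T : Ω → ℝ}
    (hG : ∀ᵐ ω ∂μ, 0 < G ω) (hT : ∀ᵐ ω ∂μ, 0 < T ω)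
    (hGi : Integrable G μ) (hTi : Integrable T μ)
    (hGlogG : Integrable (fun ω => G ω * log (G ω)) μ)
    (hGlogT : Integrable (fun ω => G ω * log (T ω)) μ) :
    ∫ ω, G ω * (log (T ω) - log (∫ ω', T ω' ∂μ)) ∂μ
      ≤ ∫ ω, G ω * log (G ω) ∂μ - (∫ ω, G ω ∂μ) * log (∫ ω, G ω ∂μ) := by
  set I := ∫ ω, G ω ∂μ
  set c := ∫ ω, T ω ∂μ
  have hI : 0 < I := integral_pos_of_ae_pos hG hGi
  have hc : 0 < c := integral_pos_of_ae_pos hT hTi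
  have hlog_scaled : (fun ω => G ω * log (I / c * T ω))
      =ᵐ[μ] fun ω => G ω * log (T ω) + G ω * log (I / c) := by
    filter_upwards [hT] with ω hTω
    rw [log_mul (div_pos hI hc).ne' hTω.ne']
    ring
  have hgibbs := integral_mul_log_le hG (hT.mono fun _ h => mul_pos (div_pos hI hc) h) hGi
    (hTi.const_mul (I / c)) hGlogG ((hGlogT.add (hGi.mul_const _)).congr hlog_scaled.symm)
  rw [integral_congr_ae hlog_scaled, integral_add hGlogT (hGi.mul_const _), integral_mul_const,
    integral_const_mul, div_mul_cancel₀ I hc.ne', log_div hI.ne' hc.ne'] at hgibbs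
  rw [integral_mul_sub_const _ hGlogT hGi]
  linarith

end MeasureTheory

/-- Duality formula for entropy: for a strictly positive integrable random variable `G` with
`G log G` integrable, the entropy `H(G) = E[G log G] - E[G] log E[G]` equals the supremum over
strictly positive random variables `T` (with `T` and `G log T` integrable) of
`E[G (log T - log E[T])]`. -/
theorem entropy_duality {Ω : Type*} [MeasurableSpace Ω]
    (μ : Measure Ω) [IsProbabilityMeasure μ]
    (G : Ω → ℝ) (hGmeas : Measurable G) (hGpos : ∀ᵐ ω ∂μ, 0 < G ω)
    (hGint : Integrable G μ)
    (hGlogint : Integrable (fun ω => G ω * log (G ω)) μ) :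
    (∫ ω, G ω * log (G ω) ∂μ) - (∫ ω, G ω ∂μ) * log (∫ ω, G ω ∂μ)
      = sSup {y : ℝ | ∃ T : Ω → ℝ, Measurable T ∧ (∀ᵐ ω ∂μ, 0 < T ω) ∧
          Integrable T μ ∧ Integrable (fun ω => G ω * log (T ω)) μ ∧
          y = ∫ ω, G ω * (log (T ω) - log (∫ ω', T ω' ∂μ)) ∂μ} := by
  symm
  refine IsGreatest.csSup_eq ⟨⟨G, hGmeas, hGpos, hGint, hGlogint, ?_⟩, ?_⟩
  · rw [integral_mul_sub_const _ hGlogint hGint]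
  · rintro y ⟨T, -, hTpos, hTint, hGlogT, rfl⟩
    exact integral_mul_log_sub_log_integral_le hGpos hTpos hGint hTint hGlogint hGlogT
end

section
/- Tensorization (entropy) inequality: if X_1,...,X_n are independent random variables and G = G(X_1,...,X_n) > 0 with suitable integrability, then H(G) ≤ Σ_{k=1}^n E[H_k(G)], where H_k(G) = E_k[G log G] - E_k[G] log E_k[G] and E_k denotes integration over X_k only. -/
/-!
Put `Φ x = x log x`, `𝒢_t = σ(X_j : j ≥ t)` and `F_t = E[Φ(E[G | 𝒢_t])]`, so that
`H(G) = F_0 - F_n` telescopes over `k`. Fix `k` and write `A = E[G | 𝒢_k]`,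
`B = E[G | 𝒢_{k+1}]`, `D = E[G | m_k]`. Since `𝒢_k` is independent of `σ(X_j : j < k)` and
`m_k = 𝒢_{k+1} ⊔ σ(X_j : j < k)`, `E[A | m_k] = B`. Integrating `G log (A D / (B G)) ≤ A D / B - G` (from `log u ≤ u - 1`) and pulling
the logarithms out of the conditional expectations gives
`F_k - F_{k+1} ≤ E[Φ G] - E[Φ D] = E[H_k(G)]`.
-/

open MeasureTheory Real ProbabilityTheory Filter
open scoped ENNReal

section PullOut

variable {Ω : Type*} {m m0 : MeasurableSpace Ω} {μ : Measure Ω}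

theorem lintegral_condLExp_mul (hm : m ≤ m0) [SigmaFinite (μ.trim hm)] {f h : Ω → ℝ≥0∞}
    (hf : AEMeasurable f μ) (hh : Measurable[m] h) :
    ∫⁻ ω, μ⁻[f|m] ω * h ω ∂μ = ∫⁻ ω, f ω * h ω ∂μ := by
  have htrim : (μ.withDensity (μ⁻[f|m])).trim hm = (μ.withDensity f).trim hm := by
    refine @Measure.ext _ m _ _ fun s hs => ?_
    rw [trim_measurableSet_eq hm hs, trim_measurableSet_eq hm hs, withDensity_apply _ (hm s hs),
      withDensity_apply _ (hm s hs), setLIntegral_condLExp hm μ f hs]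
  have hh0 : AEMeasurable h μ := (hh.mono hm le_rfl).aemeasurable
  calc ∫⁻ ω, μ⁻[f|m] ω * h ω ∂μ = ∫⁻ ω, h ω ∂μ.withDensity (μ⁻[f|m]) :=
        (lintegral_withDensity_eq_lintegral_mul₀ (measurable_condLExp' m μ f).aemeasurable hh0).symm
    _ = ∫⁻ ω, h ω ∂μ.withDensity f := by rw [← lintegral_trim hm hh, htrim, lintegral_trim hm hh]
    _ = ∫⁻ ω, f ω * h ω ∂μ := lintegral_withDensity_eq_lintegral_mul₀ hf hh0

theorem integrable_condExp_mul_iff (hm : m ≤ m0) [SigmaFinite (μ.trim hm)] {f h : Ω → ℝ}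
    (hf : Integrable f μ) (hf0 : 0 ≤ᵐ[μ] f) (hh : StronglyMeasurable[m] h) :
    Integrable (fun ω => μ[f|m] ω * h ω) μ ↔ Integrable (fun ω => f ω * h ω) μ := by
  have hh0 : AEStronglyMeasurable h μ := (hh.mono hm).aestronglyMeasurable
  have hlint : ∫⁻ ω, ‖μ[f|m] ω * h ω‖ₑ ∂μ = ∫⁻ ω, ‖f ω * h ω‖ₑ ∂μ := by
    simp_rw [enorm_mul]
    rw [← lintegral_condLExp_mul (h := fun ω => ‖h ω‖ₑ) hm hf.aestronglyMeasurable.enorm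
      (measurable_enorm.comp hh.measurable)]
    exact lintegral_congr_ae ((condLExp_enorm m hf hf0).mono fun ω hω => by simp only [hω])
  rw [Integrable, Integrable, hasFiniteIntegral_iff_enorm, hasFiniteIntegral_iff_enorm, hlint]
  exact and_congr_left' (iff_of_true
    ((stronglyMeasurable_condExp.mono hm).aestronglyMeasurable.mul hh0)
    (hf.aestronglyMeasurable.mul hh0))

theorem integral_condExp_mul (hm : m ≤ m0) [SigmaFinite (μ.trim hm)] {f h : Ω → ℝ}
    (hf : Integrable f μ) (hh : StronglyMeasurable[m] h)
    (hfh : Integrable (fun ω => f ω * h ω) μ) :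
    ∫ ω, μ[f|m] ω * h ω ∂μ = ∫ ω, f ω * h ω ∂μ :=
  (integral_congr_ae (condExp_mul_of_stronglyMeasurable_right hh hfh hf).symm).trans
    (integral_condExp hm)

theorem condExp_pos (hm : m ≤ m0) [SigmaFinite (μ.trim hm)] {f : Ω → ℝ}
    (hf : Integrable f μ) (hf_pos : ∀ᵐ ω ∂μ, 0 < f ω) : ∀ᵐ ω ∂μ, 0 < μ[f|m] ω := by
  set s := {ω | μ[f|m] ω ≤ 0}
  have hs : MeasurableSet[m] s :=
    measurableSet_le stronglyMeasurable_condExp.measurable measurable_const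
  have hint : ∫ ω in s, f ω ∂μ ≤ 0 := by
    rw [← setIntegral_condExp hm hf hs]
    exact setIntegral_nonpos (hm s hs) fun _ hω => hω
  have hnull : μ (Function.support f ∩ s) = 0 := by
    by_contra h
    have := (setIntegral_pos_iff_support_of_nonneg_ae
      (ae_restrict_of_ae (hf_pos.mono fun _ h => h.le)) hf.integrableOn).2 (pos_iff_ne_zero.2 h)
    linarith
  filter_upwards [measure_eq_zero_iff_ae_notMem.1 hnull, hf_pos] with ω hω hfω
  exact lt_of_not_ge fun h => hω ⟨hfω.ne', h⟩

end PullOut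

section MulLog

variable {Ω : Type*} {m m0 : MeasurableSpace Ω}

noncomputable def mulLogIntegral (μ : Measure Ω) (f : Ω → ℝ) : ℝ :=
  ∫ ω, f ω * log (f ω) ∂μ

variable {μ : Measure Ω} [IsFiniteMeasure μ] {f : Ω → ℝ}

theorem integrable_condExp_mul_log (hm : m ≤ m0) (hf : Integrable f μ) (hf0 : 0 ≤ᵐ[μ] f)
    (hflog : Integrable (fun ω => f ω * log (f ω)) μ) :
    Integrable (fun ω => μ[f|m] ω * log (μ[f|m] ω)) μ := by
  have hjensen : (fun ω => μ[f|m] ω * log (μ[f|m] ω)) ≤ᵐ[μ]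
      μ[fun ω => f ω * log (f ω)|m] :=
    convexOn_mul_log.map_condExp_le hm continuous_mul_log.continuousOn.lowerSemicontinuousOn
      hf0 isClosed_Ici hf hflog
  refine integrable_of_le_of_le (g₁ := fun ω => μ[f|m] ω - 1) ?_ ?_ hjensen
    (integrable_condExp.sub (integrable_const 1)) integrable_condExp
  · exact ((stronglyMeasurable_condExp.mono hm).measurable.mul
      (stronglyMeasurable_condExp.mono hm).measurable.log).aestronglyMeasurable
  · filter_upwards [condExp_nonneg hf0] with ω hω using self_sub_one_le_mul_log hω

theorem integrable_mul_log_condExp (hm : m ≤ m0) (hf : Integrable f μ) (hf0 : 0 ≤ᵐ[μ] f)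
    (hflog : Integrable (fun ω => f ω * log (f ω)) μ) :
    Integrable (fun ω => f ω * log (μ[f|m] ω)) μ :=
  (integrable_condExp_mul_iff hm hf hf0
    stronglyMeasurable_condExp.measurable.log.stronglyMeasurable).1
      (integrable_condExp_mul_log hm hf hf0 hflog)

theorem integral_mul_log_condExp (hm : m ≤ m0) (hf : Integrable f μ) (hf0 : 0 ≤ᵐ[μ] f)
    (hflog : Integrable (fun ω => f ω * log (f ω)) μ) :
    ∫ ω, f ω * log (μ[f|m] ω) ∂μ = mulLogIntegral μ (μ[f|m]) :=
  (integral_condExp_mul hm hf stronglyMeasurable_condExp.measurable.log.stronglyMeasurable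
    (integrable_mul_log_condExp hm hf hf0 hflog)).symm

theorem integral_condExp_mul_log_sub (hm : m ≤ m0) (hf : Integrable f μ) (hf0 : 0 ≤ᵐ[μ] f)
    (hflog : Integrable (fun ω => f ω * log (f ω)) μ) :
    ∫ ω, (μ[fun ω => f ω * log (f ω)|m] ω - μ[f|m] ω * log (μ[f|m] ω)) ∂μ
      = mulLogIntegral μ f - mulLogIntegral μ (μ[f|m]) := by
  rw [integral_sub integrable_condExp (integrable_condExp_mul_log hm hf hf0 hflog),
    integral_condExp hm, mulLogIntegral, mulLogIntegral]

end MulLog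

theorem mul_log_div_le_sub {x y : ℝ} (hx : 0 < x) (hy : 0 < y) : x * log (y / x) ≤ y - x :=
  calc x * log (y / x) ≤ x * (y / x - 1) :=
        mul_le_mul_of_nonneg_left (log_le_sub_one_of_pos (div_pos hy hx)) hx.le
    _ = y - x := by field_simp

section Step

variable {Ω : Type*} {m₁ m₂ m₃ m0 : MeasurableSpace Ω} {μ : Measure Ω} [IsFiniteMeasure μ]
  {G : Ω → ℝ}

theorem mulLogIntegral_condExp_sub_le (hm₁ : m₁ ≤ m0) (hm₂ : m₂ ≤ m0) (hm₃ : m₃ ≤ m0)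
    (h₂₃ : m₂ ≤ m₃) (hG : Integrable G μ) (hGpos : ∀ᵐ ω ∂μ, 0 < G ω)
    (hGlog : Integrable (fun ω => G ω * log (G ω)) μ)
    (hcond : μ[μ[G|m₁]|m₃] =ᵐ[μ] μ[G|m₂]) :
    mulLogIntegral μ (μ[G|m₁]) - mulLogIntegral μ (μ[G|m₂])
      ≤ mulLogIntegral μ G - mulLogIntegral μ (μ[G|m₃]) := by
  set A := μ[G|m₁]
  set B := μ[G|m₂]
  set D := μ[G|m₃]
  have hG0 : 0 ≤ᵐ[μ] G := hGpos.mono fun _ h => h.le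
  have hlogA := integrable_mul_log_condExp hm₁ hG hG0 hGlog
  have hlogB := integrable_mul_log_condExp hm₂ hG hG0 hGlog
  have hlogD := integrable_mul_log_condExp hm₃ hG hG0 hGlog
  have hratio : StronglyMeasurable[m₃] (fun ω => D ω / B ω) :=
    (stronglyMeasurable_condExp.measurable.div
      (stronglyMeasurable_condExp.mono h₂₃).measurable).stronglyMeasurable
  have hD_eq : (fun ω => μ[A|m₃] ω * (D ω / B ω)) =ᵐ[μ] D := by
    filter_upwards [hcond, condExp_pos hm₂ hG hGpos] with ω h hB
    rw [h, mul_div_cancel₀ _ hB.ne']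
  have hA_ratio : Integrable (fun ω => A ω * (D ω / B ω)) μ :=
    (integrable_condExp_mul_iff hm₃ integrable_condExp (condExp_nonneg hG0) hratio).1
      (integrable_condExp.congr hD_eq.symm)
  have hpointwise : (fun ω => G ω * log (A ω) - G ω * log (B ω) - G ω * log (G ω)
      + G ω * log (D ω)) ≤ᵐ[μ] fun ω => A ω * (D ω / B ω) - G ω := by
    filter_upwards [hGpos, condExp_pos hm₁ hG hGpos, condExp_pos hm₂ hG hGpos,
      condExp_pos hm₃ hG hGpos] with ω hx ha hb hd
    have hgibbs := mul_log_div_le_sub hx (mul_pos ha (div_pos hd hb))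
    rw [log_div (by positivity) hx.ne', log_mul ha.ne' (by positivity),
      log_div hd.ne' hb.ne'] at hgibbs
    linarith
  have hlhs : ∫ ω, (G ω * log (A ω) - G ω * log (B ω) - G ω * log (G ω)
      + G ω * log (D ω)) ∂μ = mulLogIntegral μ A - mulLogIntegral μ B - mulLogIntegral μ G
        + mulLogIntegral μ D := by
    rw [integral_add (f := fun ω => G ω * log (A ω) - G ω * log (B ω) - G ω * log (G ω))
        ((hlogA.sub hlogB).sub hGlog) hlogD,
      integral_sub (f := fun ω => G ω * log (A ω) - G ω * log (B ω)) (hlogA.sub hlogB) hGlog,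
      integral_sub hlogA hlogB, integral_mul_log_condExp hm₁ hG hG0 hGlog,
      integral_mul_log_condExp hm₂ hG hG0 hGlog, integral_mul_log_condExp hm₃ hG hG0 hGlog]
    rfl
  have hrhs : ∫ ω, (A ω * (D ω / B ω) - G ω) ∂μ = 0 := by
    rw [integral_sub hA_ratio hG, ← integral_condExp_mul hm₃ integrable_condExp hratio hA_ratio,
      integral_congr_ae hD_eq, integral_condExp hm₃, sub_self]
  have hmono :=
    integral_mono_ae (((hlogA.sub hlogB).sub hGlog).add hlogD) (hA_ratio.sub hG) hpointwise
  simp only [Pi.add_apply, Pi.sub_apply] at hmono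
  linarith

end Step

section Independence

variable {Ω : Type*} {mA mB mC m0 : MeasurableSpace Ω} {μ : Measure Ω} [IsFiniteMeasure μ]

theorem setIntegral_inter_of_indep (hmA : mA ≤ m0) (hmC : mC ≤ m0) (hindep : Indep mA mC μ)
    {u : Ω → ℝ} (hu : Integrable u μ) (hum : StronglyMeasurable[mA] u) {B C : Set Ω}
    (hB : MeasurableSet[mA] B) (hC : MeasurableSet[mC] C) :
    ∫ ω in B ∩ C, u ω ∂μ = μ.real C * ∫ ω in B, u ω ∂μ :=
  calc ∫ ω in B ∩ C, u ω ∂μ = ∫ ω in C, B.indicator u ω ∂μ := by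
        rw [setIntegral_indicator (hmA B hB), Set.inter_comm]
    _ = ∫ ω in C, μ[B.indicator u|mC] ω ∂μ :=
        (setIntegral_condExp hmC (hu.indicator (hmA B hB)) hC).symm
    _ = ∫ _ in C, ∫ ω, B.indicator u ω ∂μ ∂μ :=
        setIntegral_congr_ae (hmC C hC)
          ((condExp_indep_eq hmA hmC (hum.indicator hB) hindep).mono fun _ h _ => h)
    _ = μ.real C * ∫ ω in B, u ω ∂μ := by
        rw [setIntegral_const, integral_indicator (hmA B hB), smul_eq_mul]

theorem isPiSystem_inter_measurableSet (m₁ m₂ : MeasurableSpace Ω) :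
    IsPiSystem {t | ∃ B C, MeasurableSet[m₁] B ∧ MeasurableSet[m₂] C ∧ B ∩ C = t} := by
  rintro _ ⟨B₁, C₁, hB₁, hC₁, rfl⟩ _ ⟨B₂, C₂, hB₂, hC₂, rfl⟩ _
  exact ⟨B₁ ∩ B₂, C₁ ∩ C₂, hB₁.inter hB₂, hC₁.inter hC₂, Set.inter_inter_inter_comm B₁ B₂ C₁ C₂⟩

theorem sup_eq_generateFrom_inter (m₁ m₂ : MeasurableSpace Ω) :
    m₁ ⊔ m₂ = MeasurableSpace.generateFrom
      {t | ∃ B C, MeasurableSet[m₁] B ∧ MeasurableSet[m₂] C ∧ B ∩ C = t} := by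
  refine le_antisymm (sup_le ?_ ?_) (MeasurableSpace.generateFrom_le ?_)
  · exact fun B hB => MeasurableSpace.measurableSet_generateFrom
      ⟨B, Set.univ, hB, MeasurableSet.univ, Set.inter_univ B⟩
  · exact fun C hC => MeasurableSpace.measurableSet_generateFrom
      ⟨Set.univ, C, MeasurableSet.univ, hC, Set.univ_inter C⟩
  · rintro _ ⟨B, C, hB, hC, rfl⟩
    exact (le_sup_left (b := m₂) B hB).inter (le_sup_right (a := m₁) C hC)

theorem condExp_sup_indep_eq (hmA : mA ≤ m0) (hmC : mC ≤ m0) (hBA : mB ≤ mA)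
    (hindep : Indep mA mC μ) {f : Ω → ℝ} (hf : Integrable f μ) (hfm : StronglyMeasurable[mA] f) :
    μ[f|mB ⊔ mC] =ᵐ[μ] μ[f|mB] := by
  have hmB : mB ≤ m0 := hBA.trans hmA
  have hmBC : mB ⊔ mC ≤ m0 := sup_le hmB hmC
  have hsetIntegral (s : Set Ω) (hs : MeasurableSet[mB ⊔ mC] s) :
      ∫ ω in s, μ[f|mB] ω ∂μ = ∫ ω in s, f ω ∂μ := by
    induction s, hs using MeasurableSpace.induction_on_inter (sup_eq_generateFrom_inter mB mC)
      (isPiSystem_inter_measurableSet mB mC) with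
    | empty => simp
    | basic t ht =>
      obtain ⟨B, C, hB, hC, rfl⟩ := ht
      rw [setIntegral_inter_of_indep hmA hmC hindep hf hfm (hBA B hB) hC,
        setIntegral_inter_of_indep hmA hmC hindep integrable_condExp
          (stronglyMeasurable_condExp.mono hBA) (hBA B hB) hC,
        setIntegral_condExp hmB hf hB]
    | compl t ht ih =>
      have ht0 : MeasurableSet t := hmBC t ht
      have := integral_add_compl ht0 (integrable_condExp (m := mB) (f := f) (μ := μ))
      have := integral_add_compl ht0 hf
      have := integral_condExp (μ := μ) (f := f) hmB
      linarith
    | iUnion t hdisj ht ih =>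
      have ht0 i : MeasurableSet (t i) := hmBC _ (ht i)
      rw [integral_iUnion ht0 hdisj integrable_condExp.integrableOn,
        integral_iUnion ht0 hdisj hf.integrableOn]
      exact tsum_congr ih
  have hmeas : StronglyMeasurable[mB ⊔ mC] (μ[f|mB]) :=
    stronglyMeasurable_condExp.mono le_sup_left
  exact (ae_eq_condExp_of_forall_setIntegral_eq hmBC hf
    (fun _ _ _ => integrable_condExp.integrableOn) (fun s hs _ => hsetIntegral s hs)
    hmeas.aestronglyMeasurable).symm

theorem mulLogIntegral_condExp_sub_le_of_indep (hmA : mA ≤ m0) (hmC : mC ≤ m0) (hBA : mB ≤ mA)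
    (hindep : Indep mA mC μ) {G : Ω → ℝ} (hG : Integrable G μ) (hGpos : ∀ᵐ ω ∂μ, 0 < G ω)
    (hGlog : Integrable (fun ω => G ω * log (G ω)) μ) :
    mulLogIntegral μ (μ[G|mA]) - mulLogIntegral μ (μ[G|mB])
      ≤ mulLogIntegral μ G - mulLogIntegral μ (μ[G|mB ⊔ mC]) :=
  mulLogIntegral_condExp_sub_le hmA (hBA.trans hmA) (sup_le (hBA.trans hmA) hmC) le_sup_left
    hG hGpos hGlog ((condExp_sup_indep_eq hmA hmC hBA hindep integrable_condExp
      stronglyMeasurable_condExp).trans (condExp_condExp_of_le hBA hmA))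

end Independence

section FutureSigma

variable {Ω : Type*} {n : ℕ} (s : Fin n → MeasurableSpace Ω)

abbrev futureSigma (t : ℕ) : MeasurableSpace Ω :=
  ⨆ j ∈ {j : Fin n | t ≤ (j : ℕ)}, s j

theorem futureSigma_le {m0 : MeasurableSpace Ω} (h : ∀ j, s j ≤ m0) (t : ℕ) :
    futureSigma s t ≤ m0 :=
  iSup₂_le fun j _ => h j

theorem futureSigma_succ_le (t : ℕ) : futureSigma s (t + 1) ≤ futureSigma s t :=
  biSup_mono fun _ hj => Nat.le_of_succ_le hj

theorem futureSigma_zero : futureSigma s 0 = ⨆ j, s j := by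
  simp [futureSigma]

theorem futureSigma_self : futureSigma s n = ⊥ := by
  simp [futureSigma]

theorem iSup_ne_eq_futureSigma_sup (k : Fin n) :
    ⨆ (j) (_ : j ≠ k), s j = futureSigma s (k + 1) ⊔ ⨆ j ∈ {j : Fin n | k ≤ (j : ℕ)}ᶜ, s j := by
  have hsplit : {j : Fin n | (k : ℕ) + 1 ≤ j} ∪ {j | (k : ℕ) ≤ j}ᶜ = {j | j ≠ k} := by
    ext j
    simp only [Set.mem_union, Set.mem_ofPred_eq, Set.mem_compl_iff, ne_eq, Fin.ext_iff]
    omega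
  rw [futureSigma, ← iSup_union, hsplit]
  rfl

end FutureSigma

/-- Tensorization (entropy) inequality: if `X_1, …, X_n` are independent random variables and
`G = g(X_1, …, X_n) > 0` with suitable integrability, then
`H(G) ≤ ∑ k, E[H_k(G)]`, where `H_k(G) = E_k[G log G] - E_k[G] log E_k[G]` and `E_k` is the
conditional expectation given the σ-algebra generated by all variables except `X_k`. -/
theorem entropy_tensorization {Ω : Type*} [MeasurableSpace Ω]
    (μ : Measure Ω) [IsProbabilityMeasure μ]
    {n : ℕ} {𝓧 : Fin n → Type*} [∀ k, MeasurableSpace (𝓧 k)]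
    (X : ∀ k, Ω → 𝓧 k) (hXmeas : ∀ k, Measurable (X k))
    (hXindep : iIndepFun X μ)
    (g : (∀ k, 𝓧 k) → ℝ) (hgmeas : Measurable g)
    (G : Ω → ℝ) (hG : G = fun ω => g (fun k => X k ω))
    (hGpos : ∀ᵐ ω ∂μ, 0 < G ω)
    (hGint : Integrable G μ)
    (hGlogint : Integrable (fun ω => G ω * log (G ω)) μ)
    -- `m k` is the σ-algebra generated by the variables `X_j`, `j ≠ k`
    (m : Fin n → MeasurableSpace Ω)
    (hm : ∀ k, m k = ⨆ (j : Fin n) (_ : j ≠ k), MeasurableSpace.comap (X j) inferInstance) :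
    (∫ ω, G ω * log (G ω) ∂μ) - (∫ ω, G ω ∂μ) * log (∫ ω, G ω ∂μ)
      ≤ ∑ k : Fin n,
          ∫ ω, (MeasureTheory.condExp (m k) μ (fun ω' => G ω' * log (G ω')) ω
            - MeasureTheory.condExp (m k) μ G ω
              * log (MeasureTheory.condExp (m k) μ G ω)) ∂μ := by
  set s : Fin n → MeasurableSpace Ω := fun j => MeasurableSpace.comap (X j) inferInstance
  have hs j : s j ≤ _ := (hXmeas j).comap_le
  set F : ℕ → ℝ := fun t => mulLogIntegral μ (μ[G|futureSigma s t])
  have hGm : StronglyMeasurable[futureSigma s 0] G := by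
    rw [futureSigma_zero, hG]
    exact (hgmeas.comp (@measurable_pi_lambda _ _ _ (⨆ j, s j) _ _ fun k =>
      (comap_measurable (X k)).mono (le_iSup s k) le_rfl)).stronglyMeasurable
  have hF0 : F 0 = ∫ ω, G ω * log (G ω) ∂μ := by
    simp only [F, condExp_of_stronglyMeasurable (futureSigma_le s hs 0) hGm hGint, mulLogIntegral]
  have hFn : F n = (∫ ω, G ω ∂μ) * log (∫ ω, G ω ∂μ) := by
    simp [F, futureSigma_self, condExp_bot, mulLogIntegral]
  have hstep (k : Fin n) : F k - F (k + 1)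
      ≤ mulLogIntegral μ G - mulLogIntegral μ (μ[G|m k]) := by
    rw [hm k, iSup_ne_eq_futureSigma_sup]
    exact mulLogIntegral_condExp_sub_le_of_indep (futureSigma_le s hs k) (iSup₂_le fun j _ => hs j)
      (futureSigma_succ_le s k) (indep_biSup_compl hs ((iIndepFun_iff_iIndep _ _ _).1 hXindep) _)
      hGint hGpos hGlogint
  calc (∫ ω, G ω * log (G ω) ∂μ) - (∫ ω, G ω ∂μ) * log (∫ ω, G ω ∂μ)
      = ∑ k : Fin n, (F k - F (k + 1)) := by
        rw [Fin.sum_univ_eq_sum_range (fun i => F i - F (i + 1)), Finset.sum_range_sub', hF0, hFn]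
    _ ≤ ∑ k : Fin n, (mulLogIntegral μ G - mulLogIntegral μ (μ[G|m k])) :=
        Finset.sum_le_sum fun k _ => hstep k
    _ = _ := Finset.sum_congr rfl fun k _ => (integral_condExp_mul_log_sub
        (hm k ▸ iSup₂_le fun j _ => hs j) hGint (hGpos.mono fun _ h => h.le) hGlogint).symm
end

section
/- Conditional entropy bound: Let Z be a bounded function of independent X_1,...,X_n, Z_k be σ(X_j : j≠k)-measurable, and λ ∈ ℝ with -λ(Z - Z_k) ≤ 0 a.s. Then H_k(e^{λZ}) ≤ (λ²/2) E_k[e^{λZ}(Z - Z_k)²], where E_k denotes integration over X_k only and H_k(G) = E_k[G log G] - E_k[G] log E_k[G]. -/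
/-!
Write `G = e^{λZ}`. Since `x log x - x` and `exp` are convex conjugates, `a t - a log a ≤ e^t - a`
for every `a ≥ 0` and every `t`; applied to `a = E_k G` with the `E_k`-constant `t = λ Z_k`,
and combined with `E_k[λ Z_k G] = λ Z_k E_k G`, this gives the variational bound
`H_k(G) ≤ E_k[G log G - λ Z_k G - G + e^{λ Z_k}]`. With `x = λ (Z - Z_k) ≥ 0` the integrand is
`e^{λ Z_k} (x e^x - e^x + 1)`, and `x e^x - e^x + 1 ≤ x² e^x / 2` for `x ≥ 0` because
`e^{-x} ≤ 1 - x + x² / 2` there.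
-/

open MeasureTheory Real ProbabilityTheory

lemma Real.exp_neg_le_one_sub_add_sq_div_two {x : ℝ} (hx : 0 ≤ x) :
    exp (-x) ≤ 1 - x + x ^ 2 / 2 := by
  have hderiv (t : ℝ) :
      HasDerivAt (fun t => t ^ 2 / 2 - t - exp (-t)) (t - 1 + exp (-t)) t := by
    refine ((((hasDerivAt_pow 2 t).div_const 2).sub (hasDerivAt_id' t)).sub
      (hasDerivAt_neg t).exp).congr_deriv ?_
    norm_num
  have hmono := monotone_of_hasDerivAt_nonneg hderiv fun t => by
    simp only [Pi.zero_apply]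
    linarith [add_one_le_exp (-t)]
  have := hmono hx
  norm_num at this
  linarith

lemma Real.mul_exp_sub_exp_add_one_le {x : ℝ} (hx : 0 ≤ x) :
    x * exp x - exp x + 1 ≤ x ^ 2 / 2 * exp x := by
  have h := mul_le_mul_of_nonneg_right (exp_neg_le_one_sub_add_sq_div_two hx) (exp_pos x).le
  rw [exp_neg, inv_mul_cancel₀ (exp_pos x).ne'] at h
  linarith

lemma Real.mul_sub_mul_log_le_exp_sub {a : ℝ} (ha : 0 ≤ a) (t : ℝ) :
    a * t - a * log a ≤ exp t - a := by
  rcases ha.eq_or_lt with rfl | ha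
  · simp [exp_nonneg]
  calc a * t - a * log a = a * (t - log a + 1) - a := by ring
    _ ≤ a * exp (t - log a) - a := by gcongr; exact add_one_le_exp _
    _ = exp t - a := by rw [exp_sub, exp_log ha, mul_div_cancel₀ _ ha.ne']

lemma Real.exp_mul_sub_mul_exp_sub_exp_add_exp_le {u v : ℝ} (h : v ≤ u) :
    exp u * u - v * exp u - exp u + exp v ≤ (u - v) ^ 2 / 2 * exp u := by
  have key := mul_le_mul_of_nonneg_left (mul_exp_sub_exp_add_one_le (sub_nonneg.2 h))
    (exp_pos v).le
  have hu : exp u = exp v * exp (u - v) := by rw [← exp_add, add_sub_cancel]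
  rw [hu]
  linarith

lemma MeasureTheory.Integrable.comp_of_mapsTo_isCompact {Ω X : Type*} [MeasurableSpace Ω]
    {μ : Measure Ω} [IsFiniteMeasure μ] [TopologicalSpace X] [MeasurableSpace X]
    [OpensMeasurableSpace X] {K : Set X} (hK : IsCompact K) {F : Ω → X} (hF : Measurable F)
    (hFK : ∀ ω, F ω ∈ K) {φ : X → ℝ} (hφ : Continuous φ) :
    Integrable (fun ω => φ (F ω)) μ := by
  obtain ⟨B, hB⟩ := hK.exists_bound_of_continuousOn hφ.continuousOn
  exact .of_bound (hφ.measurable.comp hF).aestronglyMeasurable B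
    (ae_of_all _ fun ω => hB _ (hFK ω))

/-- The paper's `H_k(G)` when `m = σ(X_j : j ≠ k)`. -/
noncomputable def condEntropy {Ω : Type*} {m₀ : MeasurableSpace Ω} (m : MeasurableSpace Ω)
    (μ : Measure[m₀] Ω) (G : Ω → ℝ) : Ω → ℝ :=
  fun ω => μ[fun ω => G ω * log (G ω) | m] ω - μ[G | m] ω * log (μ[G | m] ω)

section

variable {Ω : Type*} {m m₀ : MeasurableSpace Ω} {μ : Measure Ω}

theorem condEntropy_le_condExp [IsFiniteMeasure μ] (hm : m ≤ m₀) {G t : Ω → ℝ}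
    (hG : 0 ≤ᵐ[μ] G) (hGi : Integrable G μ) (hGlog : Integrable (fun ω => G ω * log (G ω)) μ)
    (ht : StronglyMeasurable[m] t) (htG : Integrable (t * G) μ)
    (hexp : Integrable (fun ω => exp (t ω)) μ) :
    ∀ᵐ ω ∂μ, condEntropy m μ G ω ≤
      μ[fun ω => G ω * log (G ω) - t ω * G ω - G ω + exp (t ω) | m] ω := by
  have hlin : μ[fun ω => G ω * log (G ω) - t ω * G ω - G ω + exp (t ω) | m] =ᵐ[μ]
      μ[fun ω => G ω * log (G ω) | m] - μ[t * G | m] - μ[G | m] + μ[fun ω => exp (t ω) | m] :=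
    (condExp_add ((hGlog.sub htG).sub hGi) hexp m).trans <|
      ((condExp_sub (hGlog.sub htG) hGi m).trans <|
        (condExp_sub hGlog htG m).sub .rfl).add .rfl
  have hexp_fixed : μ[fun ω => exp (t ω) | m] = fun ω => exp (t ω) :=
    condExp_of_stronglyMeasurable hm (continuous_exp.comp_stronglyMeasurable ht) hexp
  filter_upwards [hlin, condExp_mul_of_stronglyMeasurable_left ht htG hGi,
    condExp_nonneg (m := m) hG] with ω hlin hpull hnonneg
  unfold condEntropy
  simp only [hlin, hexp_fixed, Pi.add_apply, Pi.sub_apply, hpull, Pi.mul_apply]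
  linarith [mul_sub_mul_log_le_exp_sub hnonneg (t ω)]

theorem condEntropy_exp_mul_le [IsFiniteMeasure μ] (hm : m ≤ m₀) {Z Zk : Ω → ℝ}
    (hZ : Measurable[m₀] Z) (hZk : Measurable[m] Zk) {C D : ℝ} (hC : ∀ ω, |Z ω| ≤ C)
    (hD : ∀ ω, |Zk ω| ≤ D) {l : ℝ} (hl : ∀ᵐ ω ∂μ, -l * (Z ω - Zk ω) ≤ 0) :
    ∀ᵐ ω ∂μ, condEntropy m μ (fun ω => exp (l * Z ω)) ω ≤
      l ^ 2 / 2 * μ[fun ω => exp (l * Z ω) * (Z ω - Zk ω) ^ 2 | m] ω := by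
  have hint (φ : ℝ × ℝ → ℝ) (hφ : Continuous φ) : Integrable (fun ω => φ (Z ω, Zk ω)) μ :=
    .comp_of_mapsTo_isCompact (isCompact_Icc.prod isCompact_Icc)
      (hZ.prodMk (hZk.mono hm le_rfl)) (fun ω => ⟨abs_le.1 (hC ω), abs_le.1 (hD ω)⟩) hφ
  have hG := hint (fun p => exp (l * p.1)) (by fun_prop)
  have hGlog := hint (fun p => exp (l * p.1) * log (exp (l * p.1))) <| by
    simp only [log_exp]; fun_prop
  have htG := hint (fun p => l * p.2 * exp (l * p.1)) (by fun_prop)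
  have hexp := hint (fun p => exp (l * p.2)) (by fun_prop)
  have hsq := hint (fun p => exp (l * p.1) * (p.1 - p.2) ^ 2) (by fun_prop)
  have hpointwise : (fun ω => exp (l * Z ω) * log (exp (l * Z ω)) - l * Zk ω * exp (l * Z ω)
      - exp (l * Z ω) + exp (l * Zk ω)) ≤ᵐ[μ]
      (l ^ 2 / 2) • fun ω => exp (l * Z ω) * (Z ω - Zk ω) ^ 2 := by
    filter_upwards [hl] with ω hω
    rw [log_exp]
    convert exp_mul_sub_mul_exp_sub_exp_add_exp_le (u := l * Z ω) (v := l * Zk ω)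
      (by linarith) using 1
    simp only [Pi.smul_apply, smul_eq_mul]
    ring
  filter_upwards [condEntropy_le_condExp hm (ae_of_all _ fun ω => (exp_pos _).le) hG hGlog
      (hZk.const_mul l).stronglyMeasurable htG hexp,
    condExp_mono (((hGlog.sub htG).sub hG).add hexp) (hsq.smul (l ^ 2 / 2)) hpointwise,
    condExp_smul (l ^ 2 / 2) (fun ω => exp (l * Z ω) * (Z ω - Zk ω) ^ 2) m]
    with ω hvar hmono hsmul
  exact hvar.trans (hmono.trans_eq hsmul)

end

/-- Conditional entropy bound: let `Z = g(X_1, …, X_n)` be a bounded function of independent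
random variables, `Z_k` a (bounded) random variable measurable with respect to the σ-algebra
generated by the variables other than `X_k`, and `λ ∈ ℝ` with `-λ (Z - Z_k) ≤ 0` a.s.
Then `H_k(e^{λZ}) ≤ (λ²/2) E_k[e^{λZ} (Z - Z_k)²]` almost surely, where `E_k` is the
conditional expectation given the other variables and
`H_k(G) = E_k[G log G] - E_k[G] log E_k[G]`. -/
theorem conditional_entropy_bound {Ω : Type*} [MeasurableSpace Ω]
    (μ : Measure Ω) [IsProbabilityMeasure μ]
    {n : ℕ} {𝓧 : Fin n → Type*} [∀ k, MeasurableSpace (𝓧 k)]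
    (X : ∀ k, Ω → 𝓧 k) (hXmeas : ∀ k, Measurable (X k))
    (hXindep : iIndepFun X μ)
    (g : (∀ k, 𝓧 k) → ℝ) (hgmeas : Measurable g)
    (Z : Ω → ℝ) (hZ : Z = fun ω => g (fun k => X k ω))
    (hZbd : ∃ C : ℝ, ∀ ω, |Z ω| ≤ C)
    (k : Fin n)
    -- `m` is the σ-algebra generated by the variables `X_j`, `j ≠ k`
    (m : MeasurableSpace Ω)
    (hm : m = ⨆ (j : Fin n) (_ : j ≠ k), MeasurableSpace.comap (X j) inferInstance)
    (Zk : Ω → ℝ) (hZkmeas : Measurable[m] Zk)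
    (hZkbd : ∃ C : ℝ, ∀ ω, |Zk ω| ≤ C)
    (l : ℝ) (hl : ∀ᵐ ω ∂μ, -l * (Z ω - Zk ω) ≤ 0) :
    ∀ᵐ ω ∂μ,
      MeasureTheory.condExp m μ (fun ω' => exp (l * Z ω') * log (exp (l * Z ω'))) ω
          - MeasureTheory.condExp m μ (fun ω' => exp (l * Z ω')) ω
            * log (MeasureTheory.condExp m μ (fun ω' => exp (l * Z ω')) ω)
        ≤ l ^ 2 / 2
          * MeasureTheory.condExp m μ (fun ω' => exp (l * Z ω') * (Z ω' - Zk ω') ^ 2) ω := by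
  obtain ⟨C, hC⟩ := hZbd
  obtain ⟨D, hD⟩ := hZkbd
  refine condEntropy_exp_mul_le ?_ ?_ hZkmeas hC hD hl
  · exact hm ▸ iSup₂_le fun j _ => (hXmeas j).comap_le
  -- `m` is a local instance as well, so the σ-algebra of `Ω` is left to unification.
  · exact hZ ▸ hgmeas.comp (@measurable_pi_lambda _ _ _ (_) _ _ hXmeas)
end

section
/- Herbst argument (sub-Gaussian MGF bound, lower tail version): If Z is a bounded random variable such that for all λ ≤ 0, λ E[Z e^{λZ}] - E[e^{λZ}] log E[e^{λZ}] ≤ (λ²/2) K E[e^{λZ}] for some constant K ≥ 0, then for all λ ≤ 0, E[e^{λ(Z - E Z)}] ≤ exp(K λ²/2). -/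
/-!
Dividing the hypothesis by `E[e^{λZ}]` says that the cumulant generating function `Λ` satisfies
`λ Λ'(λ) - Λ(λ) ≤ K λ² / 2`, i.e. `(Λ(λ) / λ - K λ / 2)' ≤ 0` for `λ < 0`. So `Λ(λ) / λ - K λ / 2`
is antitone on `(-∞, 0)`, and its limit at `0⁻` is `Λ'(0) = E[Z]` since `Λ(0) = 0`. Hence
`Λ(λ) ≤ λ E[Z] + K λ² / 2`, which is the claim after exponentiating.
-/

open MeasureTheory Real Filter Set Topology ProbabilityTheory

theorem le_deriv_zero_mul_add_mul_sq {f f' : ℝ → ℝ} {c : ℝ} (hf0 : f 0 = 0)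
    (hf : ∀ x ≤ 0, HasDerivAt f (f' x) x) (hineq : ∀ x < 0, x * f' x - f x ≤ c * x ^ 2)
    {l : ℝ} (hl : l ≤ 0) : f l ≤ f' 0 * l + c * l ^ 2 := by
  rcases hl.eq_or_lt with rfl | hl
  · simp [hf0]
  set g : ℝ → ℝ := fun x ↦ f x / x - c * x
  have hg : ∀ x < 0, HasDerivAt g ((f' x * x - f x * 1) / x ^ 2 - c) x := fun x hx ↦
    (((hf x hx.le).div (hasDerivAt_id x) hx.ne).sub ((hasDerivAt_id x).const_mul c)).congr_deriv
      (by simp)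
  have hanti : AntitoneOn g (Iio 0) := by
    refine antitoneOn_of_deriv_nonpos (convex_Iio 0)
      (fun x hx ↦ (hg x hx).continuousAt.continuousWithinAt) ?_ ?_ <;> rw [interior_Iio]
    · exact fun x hx ↦ (hg x hx).differentiableAt.differentiableWithinAt
    · intro x hx
      rw [(hg x hx).deriv, sub_nonpos, div_le_iff₀ (sq_pos_of_neg hx)]
      linarith [hineq x hx]
  -- `f x / x` is the slope of `f` at `0`
  have hlim : Tendsto g (𝓝[<] 0) (𝓝 (f' 0)) := by
    have hslope := (hasDerivAt_iff_tendsto_slope.1 (hf 0 le_rfl)).mono_left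
      (nhdsWithin_mono 0 fun x (hx : x ∈ Iio 0) ↦ hx.ne)
    have hlin : Tendsto (fun x ↦ c * x) (𝓝[<] 0) (𝓝 0) :=
      (continuous_const_mul c).tendsto' 0 0 (mul_zero c) |>.mono_left nhdsWithin_le_nhds
    simpa [g, slope_def_field, hf0] using hslope.sub hlin
  have hgl : f' 0 ≤ g l := le_of_tendsto hlim <| by
    filter_upwards [Ioo_mem_nhdsLT hl] with t ht
    exact hanti hl ht.2 ht.1.le
  rw [le_sub_iff_add_le, le_div_iff_of_neg hl] at hgl
  linarith

namespace ProbabilityTheory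

variable {Ω : Type*} [MeasurableSpace Ω] {μ : Measure Ω} {X : Ω → ℝ}

lemma hasDerivAt_cgf_of_forall_integrable (hX : ∀ t, Integrable (fun ω ↦ exp (t * X ω)) μ)
    (t : ℝ) : HasDerivAt (cgf X μ) (μ[fun ω ↦ X ω * exp (t * X ω)] / mgf X μ t) t := by
  have ht : t ∈ interior (integrableExpSet X μ) := by
    rw [show integrableExpSet X μ = univ from eq_univ_of_forall hX, interior_univ]
    trivial
  rw [← deriv_cgf ht]
  exact (analyticAt_cgf ht).differentiableAt.hasDerivAt

lemma integral_exp_mul_sub_integral_le_of_cgf_le [IsProbabilityMeasure μ] {t c : ℝ}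
    (hX : Integrable (fun ω ↦ exp (t * X ω)) μ) (h : cgf X μ t ≤ t * μ[X] + c) :
    ∫ ω, exp (t * (X ω - μ[X])) ∂μ ≤ exp c := by
  calc ∫ ω, exp (t * (X ω - μ[X])) ∂μ = exp (cgf X μ t) * exp (-(t * μ[X])) := by
        simp_rw [mul_sub, sub_eq_add_neg, exp_add]
        rw [integral_mul_const, exp_cgf hX, mgf]
    _ ≤ exp (t * μ[X] + c) * exp (-(t * μ[X])) := by gcongr
    _ = exp c := by rw [← exp_add]; ring_nf

end ProbabilityTheory

theorem herbst_left_general {Ω : Type*} [MeasurableSpace Ω]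
    (μ : Measure Ω) [IsProbabilityMeasure μ]
    (Z : Ω → ℝ) (hZmeas : Measurable Z) (hZbd : ∃ C : ℝ, ∀ ω, |Z ω| ≤ C)
    (K : ℝ)
    (hent : ∀ l : ℝ, l ≤ 0 →
      l * ∫ ω, Z ω * exp (l * Z ω) ∂μ
        - (∫ ω, exp (l * Z ω) ∂μ) * Real.log (∫ ω, exp (l * Z ω) ∂μ)
      ≤ l ^ 2 / 2 * K * ∫ ω, exp (l * Z ω) ∂μ) :
    ∀ l : ℝ, l ≤ 0 →
      ∫ ω, exp (l * (Z ω - ∫ ω', Z ω' ∂μ)) ∂μ ≤ exp (K * l ^ 2 / 2) := by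
  intro l hl
  obtain ⟨C, hC⟩ := hZbd
  have hint (t : ℝ) : Integrable (fun ω ↦ exp (t * Z ω)) μ :=
    integrable_exp_mul_of_mem_Icc hZmeas.aemeasurable (ae_of_all _ fun ω ↦ abs_le.1 (hC ω))
  have hent_cgf : ∀ x < 0, x * (μ[fun ω ↦ Z ω * exp (x * Z ω)] / mgf Z μ x) - cgf Z μ x
      ≤ K / 2 * x ^ 2 := by
    intro x hx
    have hpos := mgf_pos (hint x)
    calc x * (μ[fun ω ↦ Z ω * exp (x * Z ω)] / mgf Z μ x) - cgf Z μ x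
        = (x * μ[fun ω ↦ Z ω * exp (x * Z ω)] - mgf Z μ x * log (mgf Z μ x)) / mgf Z μ x := by
          rw [cgf]; field_simp
      _ ≤ x ^ 2 / 2 * K * mgf Z μ x / mgf Z μ x := by gcongr; exact hent x hx.le
      _ = K / 2 * x ^ 2 := by field_simp
  have hcgf := le_deriv_zero_mul_add_mul_sq cgf_zero
    (fun x _ ↦ hasDerivAt_cgf_of_forall_integrable hint x) hent_cgf hl
  refine integral_exp_mul_sub_integral_le_of_cgf_le (hint l) (hcgf.trans_eq ?_)
  simp only [zero_mul, exp_zero, mul_one, mgf_zero', probReal_univ, div_one]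
  ring

/-- Herbst argument (lower tail version): if a bounded random variable `Z` satisfies the
entropy differential inequality
`λ E[Z e^{λZ}] - E[e^{λZ}] log E[e^{λZ}] ≤ (λ²/2) K E[e^{λZ}]` for all `λ ≤ 0`,
then `E[e^{λ(Z - EZ)}] ≤ exp (K λ² / 2)` for all `λ ≤ 0`. -/
theorem herbst_left {Ω : Type*} [MeasurableSpace Ω]
    (μ : Measure Ω) [IsProbabilityMeasure μ]
    (Z : Ω → ℝ) (hZmeas : Measurable Z) (hZbd : ∃ C : ℝ, ∀ ω, |Z ω| ≤ C)
    (K : ℝ) (hK : 0 ≤ K)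
    (hent : ∀ l : ℝ, l ≤ 0 →
      l * ∫ ω, Z ω * exp (l * Z ω) ∂μ
        - (∫ ω, exp (l * Z ω) ∂μ) * Real.log (∫ ω, exp (l * Z ω) ∂μ)
      ≤ l ^ 2 / 2 * K * ∫ ω, exp (l * Z ω) ∂μ) :
    ∀ l : ℝ, l ≤ 0 →
      ∫ ω, exp (l * (Z ω - ∫ ω', Z ω' ∂μ)) ∂μ ≤ exp (K * l ^ 2 / 2) :=
  herbst_left_general μ Z hZmeas hZbd K hent
end

section
/- Column-stability of eigenvalues: with Z(X) = λ_k((1/N) X X*) for an n×N complex matrix X with entries bounded in modulus by 1, and Z_{t_0}^{(M)} = inf over admissible replacement columns x_{t_0} (entries bounded by 1) of Z of the modified matrix, one has 0 ≤ Z(X) - Z_{t_0}^{(M)} ≤ n/N; consequently Σ_{t_0=1}^N (Z - Z_{t_0}^{(M)})² ≤ n²/N. -/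
open Matrix

/-- The `k`-th largest entry of a real tuple (`k = 0` gives the largest). -/
noncomputable def sortedDesc {n : ℕ} (v : Fin n → ℝ) (k : Fin n) : ℝ :=
  (v ∘ Tuple.sort v) k.rev

/-- The scaled sample covariance matrix `(1/N) X Xᴴ` is Hermitian. -/
theorem covMatrix_isHermitian {n N : ℕ} (X : Matrix (Fin n) (Fin N) ℂ) :
    (((N : ℂ)⁻¹) • (X * Xᴴ)).IsHermitian := by
  unfold Matrix.IsHermitian
  rw [Matrix.conjTranspose_smul, (Matrix.isHermitian_mul_conjTranspose_self X).eq]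
  norm_num

/-- The `k`-th largest eigenvalue of the sample covariance matrix `(1/N) X Xᴴ`. -/
noncomputable def covEV {n N : ℕ} (X : Matrix (Fin n) (Fin N) ℂ) (k : Fin n) : ℝ :=
  sortedDesc (covMatrix_isHermitian X).eigenvalues k

/-!
Replacing the column `c = X_{·t₀}` by `x` changes the quadratic form of `X Xᴴ` by
`|⟪c, v⟫|² - |⟪x, v⟫|² ≤ ‖c‖² ‖v‖² ≤ n ‖v‖²`, so `(1/N) X Xᴴ ≤ (1/N) X' X'ᴴ + (n/N) • 1` in the
Loewner order. Weyl's inequality `A ≤ B + c • 1 → λ_k(A) ≤ λ_k(B) + c` follows from a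
Courant–Fischer dimension count: the span of the top `k + 1` eigenvectors of `A` meets the span of
the bottom `n - k` eigenvectors of `B`. Hence every admissible replacement lowers `λ_k` by at most
`n/N`, and keeping the column shows the infimum is at most `Z`; summing the squares of `N`
quantities in `[0, n/N]` gives `n²/N`.
-/

open WithLp
open scoped ComplexOrder MatrixOrder

namespace OrthonormalBasis

variable {𝕜 E ι : Type*} [RCLike 𝕜] [NormedAddCommGroup E] [InnerProductSpace 𝕜 E] [Fintype ι]

lemma sum_sq_norm_repr (b : OrthonormalBasis ι 𝕜 E) (w : E) :
    ∑ i, ‖b.repr w i‖ ^ 2 = ‖w‖ ^ 2 := by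
  rw [← b.repr.norm_map, EuclideanSpace.norm_sq_eq]

lemma repr_apply_eq_zero_of_mem_span (b : OrthonormalBasis ι 𝕜 E) {S : Set ι} {w : E}
    (hw : w ∈ Submodule.span 𝕜 (b '' S)) {i : ι} (hi : i ∉ S) : b.repr w i = 0 := by
  rw [b.repr_apply_apply]
  induction hw using Submodule.span_induction with
  | mem x hx =>
    obtain ⟨j, hj, rfl⟩ := hx
    exact b.orthonormal.2 fun h => hi (h ▸ hj)
  | zero => simp
  | add x y _ _ hx hy => simp [inner_add_right, hx, hy]
  | smul a x _ hx => simp [inner_smul_right, hx]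

lemma finrank_span_image (b : OrthonormalBasis ι 𝕜 E) (S : Finset ι) :
    Module.finrank 𝕜 (Submodule.span 𝕜 (b '' S)) = S.card := by
  rw [Set.image_eq_range]
  exact (finrank_span_eq_card (b := fun j : S => b j)
    (b.orthonormal.linearIndependent.comp _ Subtype.val_injective)).trans (by simp)

end OrthonormalBasis

lemma Submodule.exists_mem_mem_ne_zero_of_finrank_lt_add {K V : Type*} [DivisionRing K]
    [AddCommGroup V] [Module K V] [FiniteDimensional K V] {U W : Submodule K V}
    (h : Module.finrank K V < Module.finrank K U + Module.finrank K W) :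
    ∃ w ∈ U, w ∈ W ∧ w ≠ 0 := by
  by_contra! hUW
  exact h.not_ge (Submodule.finrank_add_finrank_le_of_disjoint
    (Submodule.disjoint_def.2 fun w hwU hwW => hUW w hwU hwW))

namespace Matrix

variable {𝕜 : Type*} [RCLike 𝕜] {ι κ : Type*}

lemma of_ite_eq_updateCol {α : Type*} [DecidableEq κ] (X : Matrix ι κ α) (j : κ) (c : ι → α) :
    (of fun i t => if t = j then c i else X i t) = X.updateCol j c := by
  ext i t
  simp [updateCol_apply]

variable [Fintype ι]

lemma re_star_dotProduct_self (x : ι → 𝕜) : RCLike.re (star x ⬝ᵥ x) = ∑ i, ‖x i‖ ^ 2 := by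
  simp [dotProduct, RCLike.conj_mul]

lemma le_of_re_dotProduct_mulVec_le {A B : Matrix ι ι 𝕜} (hA : A.IsHermitian)
    (hB : B.IsHermitian)
    (h : ∀ x, RCLike.re (star x ⬝ᵥ (A *ᵥ x)) ≤ RCLike.re (star x ⬝ᵥ (B *ᵥ x))) : A ≤ B := by
  refine le_iff.2 (.of_dotProduct_mulVec_nonneg (hB.sub hA) fun x => ?_)
  rw [RCLike.nonneg_iff, (hB.sub hA).im_star_dotProduct_mulVec_self]
  simpa [sub_mulVec, dotProduct_sub] using h x

lemma re_dotProduct_mulVec_le_of_le {A B : Matrix ι ι 𝕜} (h : A ≤ B) (x : ι → 𝕜) :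
    RCLike.re (star x ⬝ᵥ (A *ᵥ x)) ≤ RCLike.re (star x ⬝ᵥ (B *ᵥ x)) := by
  simpa [sub_mulVec, dotProduct_sub] using (le_iff.1 h).re_dotProduct_nonneg x

lemma norm_sq_conjTranspose_mulVec_le {X : Matrix ι κ 𝕜} {t : κ} (hX : ∀ i, ‖X i t‖ ≤ 1)
    (v : ι → 𝕜) : ‖(Xᴴ *ᵥ v) t‖ ^ 2 ≤ Fintype.card ι * ∑ i, ‖v i‖ ^ 2 := by
  have hle : ‖(Xᴴ *ᵥ v) t‖ ≤ ∑ i, ‖v i‖ := by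
    simp only [mulVec, dotProduct]
    refine (norm_sum_le _ _).trans (Finset.sum_le_sum fun i _ => ?_)
    rw [conjTranspose_apply, norm_mul, norm_star]
    exact mul_le_of_le_one_left (norm_nonneg _) (hX i)
  calc ‖(Xᴴ *ᵥ v) t‖ ^ 2 ≤ (∑ i, ‖v i‖) ^ 2 := by gcongr
    _ ≤ Fintype.card ι * ∑ i, ‖v i‖ ^ 2 := by
      simpa using sq_sum_le_card_mul_sum_sq (s := Finset.univ) (f := fun i => ‖v i‖)

lemma re_star_dotProduct_mul_conjTranspose_mulVec [Fintype κ] (X : Matrix ι κ 𝕜) (v : ι → 𝕜) :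
    RCLike.re (star v ⬝ᵥ ((X * Xᴴ) *ᵥ v)) = ∑ t, ‖(Xᴴ *ᵥ v) t‖ ^ 2 := by
  rw [← mulVec_mulVec, dotProduct_mulVec, ← conjTranspose_conjTranspose X, ← star_mulVec,
    conjTranspose_conjTranspose, re_star_dotProduct_self]

lemma sum_norm_sq_conjTranspose_mulVec_le_updateCol [Fintype κ] [DecidableEq κ]
    {X : Matrix ι κ 𝕜} {t₀ : κ} (hX : ∀ i, ‖X i t₀‖ ≤ 1) (x v : ι → 𝕜) :
    ∑ t, ‖(Xᴴ *ᵥ v) t‖ ^ 2 ≤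
      ∑ t, ‖((X.updateCol t₀ x)ᴴ *ᵥ v) t‖ ^ 2 + Fintype.card ι * ∑ i, ‖v i‖ ^ 2 := by
  have hsame : ∀ t ≠ t₀, (Xᴴ *ᵥ v) t = ((X.updateCol t₀ x)ᴴ *ᵥ v) t := fun t ht => by
    simp [mulVec, dotProduct, ht]
  calc ∑ t, ‖(Xᴴ *ᵥ v) t‖ ^ 2
      = ∑ t ∈ Finset.univ.erase t₀, ‖((X.updateCol t₀ x)ᴴ *ᵥ v) t‖ ^ 2 + ‖(Xᴴ *ᵥ v) t₀‖ ^ 2 := by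
        rw [← Finset.sum_erase_add _ _ (Finset.mem_univ t₀)]
        congr 1
        exact Finset.sum_congr rfl fun t ht => by rw [hsame t (Finset.ne_of_mem_erase ht)]
    _ ≤ ∑ t, ‖((X.updateCol t₀ x)ᴴ *ᵥ v) t‖ ^ 2 + Fintype.card ι * ∑ i, ‖v i‖ ^ 2 := by
        gcongr
        · exact Finset.erase_subset _ _
        · exact norm_sq_conjTranspose_mulVec_le hX v

variable [DecidableEq ι]

lemma re_dotProduct_add_smul_one_mulVec (B : Matrix ι ι 𝕜) (c : ℝ) (x : ι → 𝕜) :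
    RCLike.re (star x ⬝ᵥ ((B + c • 1) *ᵥ x)) =
      RCLike.re (star x ⬝ᵥ (B *ᵥ x)) + c * ∑ i, ‖x i‖ ^ 2 := by
  rw [add_mulVec, dotProduct_add, map_add, smul_mulVec, one_mulVec, dotProduct_smul,
    RCLike.smul_re, re_star_dotProduct_self]

namespace IsHermitian

variable {A : Matrix ι ι 𝕜}

lemma re_star_dotProduct_mulVec_eq_sum (hA : A.IsHermitian) (w : EuclideanSpace 𝕜 ι) :
    RCLike.re (star (ofLp w) ⬝ᵥ (A *ᵥ ofLp w)) =
      ∑ i, hA.eigenvalues i * ‖hA.eigenvectorBasis.repr w i‖ ^ 2 := by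
  set b := hA.eigenvectorBasis
  have hAw : A *ᵥ ofLp w = ∑ i, (hA.eigenvalues i * b.repr w i) • ofLp (b i) := by
    conv_lhs => rw [← b.sum_repr w]
    simp only [ofLp_sum, ofLp_smul, mulVec_sum, mulVec_smul]
    refine Finset.sum_congr rfl fun i _ => ?_
    rw [hA.mulVec_eigenvectorBasis, RCLike.real_smul_eq_coe_smul (K := 𝕜), smul_smul, mul_comm]
  have hwb : ∀ i, star (ofLp w) ⬝ᵥ ofLp (b i) = starRingEnd 𝕜 (b.repr w i) := fun i => by
    rw [dotProduct_comm, ← EuclideanSpace.inner_eq_star_dotProduct, ← inner_conj_symm,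
      b.repr_apply_apply]
  simp [hAw, dotProduct_sum, dotProduct_smul, hwb, mul_assoc, RCLike.mul_conj]

lemma mul_norm_sq_le_re_of_mem_span (hA : A.IsHermitian) {S : Set ι} {c : ℝ}
    (hc : ∀ i ∈ S, c ≤ hA.eigenvalues i) {w : EuclideanSpace 𝕜 ι}
    (hw : w ∈ Submodule.span 𝕜 (hA.eigenvectorBasis '' S)) :
    c * ‖w‖ ^ 2 ≤ RCLike.re (star (ofLp w) ⬝ᵥ (A *ᵥ ofLp w)) := by
  rw [hA.re_star_dotProduct_mulVec_eq_sum, ← hA.eigenvectorBasis.sum_sq_norm_repr, Finset.mul_sum]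
  refine Finset.sum_le_sum fun i _ => ?_
  by_cases hi : i ∈ S
  · exact mul_le_mul_of_nonneg_right (hc i hi) (sq_nonneg _)
  · simp [hA.eigenvectorBasis.repr_apply_eq_zero_of_mem_span hw hi]

lemma re_le_mul_norm_sq_of_mem_span (hA : A.IsHermitian) {S : Set ι} {c : ℝ}
    (hc : ∀ i ∈ S, hA.eigenvalues i ≤ c) {w : EuclideanSpace 𝕜 ι}
    (hw : w ∈ Submodule.span 𝕜 (hA.eigenvectorBasis '' S)) :
    RCLike.re (star (ofLp w) ⬝ᵥ (A *ᵥ ofLp w)) ≤ c * ‖w‖ ^ 2 := by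
  rw [hA.re_star_dotProduct_mulVec_eq_sum, ← hA.eigenvectorBasis.sum_sq_norm_repr, Finset.mul_sum]
  refine Finset.sum_le_sum fun i _ => ?_
  by_cases hi : i ∈ S
  · exact mul_le_mul_of_nonneg_right (hc i hi) (sq_nonneg _)
  · simp [hA.eigenvectorBasis.repr_apply_eq_zero_of_mem_span hw hi]

end IsHermitian

theorem sortedDesc_eigenvalues_le_add {n : ℕ} {A B : Matrix (Fin n) (Fin n) 𝕜}
    (hA : A.IsHermitian) (hB : B.IsHermitian) {c : ℝ} (hAB : A ≤ B + c • 1) (k : Fin n) :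
    sortedDesc hA.eigenvalues k ≤ sortedDesc hB.eigenvalues k + c := by
  set SA := (Finset.Ici k.rev).image (Tuple.sort hA.eigenvalues)
  set SB := (Finset.Iic k.rev).image (Tuple.sort hB.eigenvalues)
  have hcard : n < SA.card + SB.card := by
    rw [Finset.card_image_of_injective _ (Equiv.injective _),
      Finset.card_image_of_injective _ (Equiv.injective _), Fin.card_Ici, Fin.card_Iic,
      Fin.val_rev]
    omega
  obtain ⟨w, hwA, hwB, hw⟩ := Submodule.exists_mem_mem_ne_zero_of_finrank_lt_add
    (U := Submodule.span 𝕜 (hA.eigenvectorBasis '' SA))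
    (W := Submodule.span 𝕜 (hB.eigenvectorBasis '' SB))
    (by rwa [finrank_euclideanSpace_fin, OrthonormalBasis.finrank_span_image,
      OrthonormalBasis.finrank_span_image])
  have hlow := hA.mul_norm_sq_le_re_of_mem_span (c := sortedDesc hA.eigenvalues k) (by
    simp only [SA, Finset.coe_image, Set.forall_mem_image]
    exact fun j hj => Tuple.monotone_sort hA.eigenvalues (Finset.mem_Ici.1 hj)) hwA
  have hup := hB.re_le_mul_norm_sq_of_mem_span (c := sortedDesc hB.eigenvalues k) (by
    simp only [SB, Finset.coe_image, Set.forall_mem_image]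
    exact fun j hj => Tuple.monotone_sort hB.eigenvalues (Finset.mem_Iic.1 hj)) hwB
  have hquad := re_dotProduct_mulVec_le_of_le hAB (ofLp w)
  rw [re_dotProduct_add_smul_one_mulVec, ← EuclideanSpace.norm_sq_eq] at hquad
  have hw2 : 0 < ‖w‖ ^ 2 := by positivity
  nlinarith

end Matrix

lemma re_star_dotProduct_covMatrix_mulVec {n N : ℕ} (X : Matrix (Fin n) (Fin N) ℂ)
    (v : Fin n → ℂ) :
    RCLike.re (star v ⬝ᵥ (((N : ℂ)⁻¹ • (X * Xᴴ)) *ᵥ v)) = (N : ℝ)⁻¹ * ∑ t, ‖(Xᴴ *ᵥ v) t‖ ^ 2 := by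
  rw [smul_mulVec, dotProduct_smul, smul_eq_mul, ← re_star_dotProduct_mul_conjTranspose_mulVec,
    ← Complex.ofReal_natCast, ← Complex.ofReal_inv, RCLike.re_to_complex,
    Complex.re_ofReal_mul, RCLike.re_to_complex]

theorem covMatrix_le_updateCol_add {n N : ℕ} {X : Matrix (Fin n) (Fin N) ℂ} {t₀ : Fin N}
    (hX : ∀ i, ‖X i t₀‖ ≤ 1) (x : Fin n → ℂ) :
    (N : ℂ)⁻¹ • (X * Xᴴ) ≤
      (N : ℂ)⁻¹ • (X.updateCol t₀ x * (X.updateCol t₀ x)ᴴ) + ((n : ℝ) / N) • 1 := by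
  refine le_of_re_dotProduct_mulVec_le (covMatrix_isHermitian X)
    ((covMatrix_isHermitian _).add (isHermitian_one.smul (IsSelfAdjoint.all _))) fun v => ?_
  rw [re_dotProduct_add_smul_one_mulVec, re_star_dotProduct_covMatrix_mulVec,
    re_star_dotProduct_covMatrix_mulVec, div_eq_inv_mul, mul_assoc, ← mul_add]
  simpa using mul_le_mul_of_nonneg_left (sum_norm_sq_conjTranspose_mulVec_le_updateCol hX x v)
    (inv_nonneg.2 (Nat.cast_nonneg N : (0 : ℝ) ≤ N))

theorem covEV_le_covEV_updateCol_add {n N : ℕ} {X : Matrix (Fin n) (Fin N) ℂ} {t₀ : Fin N}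
    (hX : ∀ i, ‖X i t₀‖ ≤ 1) (x : Fin n → ℂ) (k : Fin n) :
    covEV X k ≤ covEV (X.updateCol t₀ x) k + n / N :=
  sortedDesc_eigenvalues_le_add _ _ (covMatrix_le_updateCol_add hX x) k

/-- Column-stability of eigenvalues: for an `n × N` complex matrix `X` with entries of
modulus at most `1`, let `Z = λ_k((1/N) X Xᴴ)` and let `Z_{t₀}^{(M)}` be the infimum of the
corresponding eigenvalue over all replacements of column `t₀` by a vector with entries of
modulus at most `1`. Then `0 ≤ Z - Z_{t₀}^{(M)} ≤ n/N` for every `t₀`, and consequently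
`∑_{t₀} (Z - Z_{t₀}^{(M)})² ≤ n²/N`. -/
theorem covEV_column_stability {n N : ℕ} (X : Matrix (Fin n) (Fin N) ℂ)
    (hX : ∀ i j, ‖X i j‖ ≤ 1) (k : Fin n)
    (ZM : Fin N → ℝ)
    (hZM : ∀ t₀, ZM t₀ = sInf {r : ℝ | ∃ x : Fin n → ℂ, (∀ l, ‖x l‖ ≤ 1) ∧
        r = covEV (Matrix.of fun i t => if t = t₀ then x i else X i t) k}) :
    (∀ t₀ : Fin N, 0 ≤ covEV X k - ZM t₀ ∧ covEV X k - ZM t₀ ≤ (n : ℝ) / N) ∧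
      ∑ t₀ : Fin N, (covEV X k - ZM t₀) ^ 2 ≤ (n : ℝ) ^ 2 / N := by
  have hstab : ∀ t₀ : Fin N, 0 ≤ covEV X k - ZM t₀ ∧ covEV X k - ZM t₀ ≤ (n : ℝ) / N := by
    intro t₀
    simp only [hZM t₀, of_ite_eq_updateCol]
    set S := {r : ℝ | ∃ x : Fin n → ℂ, (∀ l, ‖x l‖ ≤ 1) ∧ r = covEV (X.updateCol t₀ x) k}
    have hmem : covEV X k ∈ S :=
      ⟨fun i => X i t₀, fun l => hX l t₀, by rw [updateCol_eq_self]⟩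
    have hlow : ∀ r ∈ S, covEV X k - n / N ≤ r := by
      rintro r ⟨x, -, rfl⟩
      linarith [covEV_le_covEV_updateCol_add (fun i => hX i t₀) x k]
    exact ⟨sub_nonneg.2 (csInf_le ⟨_, hlow⟩ hmem), sub_le_comm.1 (le_csInf ⟨_, hmem⟩ hlow)⟩
  refine ⟨hstab, ?_⟩
  calc ∑ t₀, (covEV X k - ZM t₀) ^ 2 ≤ ∑ _t₀ : Fin N, ((n : ℝ) / N) ^ 2 :=
        Finset.sum_le_sum fun t₀ _ => pow_le_pow_left₀ (hstab t₀).1 (hstab t₀).2 2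
    _ = (n : ℝ) ^ 2 / N := by
        rw [Finset.sum_const, Finset.card_univ, Fintype.card_fin, nsmul_eq_mul]
        rcases eq_or_ne N 0 with rfl | hN
        · simp
        · field_simp
end
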